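/- Let 𝒩 be a nonempty set, k a field of characteristic 0, K = k((ε)), and T a symmetral K-valued mould. Then there exists at most one pair (U_-, U_+) of K-valued moulds such that U_-^∅ = U_+^∅ = 1, U_-^{n̲} ∈ K_- for every nonempty word n̲, U_+^{n̲} ∈ K_+ for every word n̲, and U_- × T = U_+. -/
import Mathlib


open scoped Classical

/-- Shuffle coefficient: the number of ways the word `n` can be obtained by interleaving
the letters of `a` and `b` while preserving their internal orders. -/
noncomputable def sh {𝒩 : Type*} : List 𝒩 → List 𝒩 → List 𝒩 → ℕ
  | [], b, n => if b = n then 1 else 0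
  | a, [], n => if a = n then 1 else 0
  | _ :: _, _ :: _, [] => 0
  | x :: a, y :: b, z :: n =>
      (if x = z then sh a (y :: b) n else 0) + (if y = z then sh (x :: a) b n else 0)

/-- Mould multiplication: `(M × N)^n = ∑_{n = a b} M^a N^b`. -/
noncomputable def mmul {𝒩 A : Type*} [Semiring A] (M N : List 𝒩 → A) : List 𝒩 → A :=
  fun n => ∑ i ∈ Finset.range (n.length + 1), M (n.take i) * N (n.drop i)

/-- A mould `M` is symmetral if `M^∅ = 1` and
`∑_n sh^{a,b}_n M^n = M^a M^b` for all nonempty words `a`, `b`. -/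
def Symmetral {𝒩 A : Type*} [CommSemiring A] (M : List 𝒩 → A) : Prop :=
  M [] = 1 ∧ ∀ a b : List 𝒩, a ≠ [] → b ≠ [] →
    (∑ᶠ n : List 𝒩, (sh a b n : A) * M n) = M a * M b

/-- Membership in `K_- = ε⁻¹ k[ε⁻¹]`: all coefficients of nonnegative powers vanish
(for Laurent series, this forces a polynomial in `ε⁻¹` with zero constant term). -/
def Kminus {k : Type*} [Field k] (f : LaurentSeries k) : Prop :=
  ∀ n : ℤ, 0 ≤ n → f.coeff n = 0

/-- Membership in `K_+ = k[[ε]]`: all coefficients of negative powers vanish. -/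
def Kplus {k : Type*} [Field k] (f : LaurentSeries k) : Prop :=
  ∀ n : ℤ, n < 0 → f.coeff n = 0

/-- uniqueness of the Birkhoff decomposition of a symmetral
`K`-valued mould `T`, where `K = k((ε))`. -/
theorem birkhoff_decomposition_unique
    {𝒩 k : Type*} [Nonempty 𝒩] [Field k] [CharZero k]
    (T : List 𝒩 → LaurentSeries k) (hT : Symmetral T)
    (Um Up Um' Up' : List 𝒩 → LaurentSeries k)
    (hUm0 : Um [] = 1) (hUp0 : Up [] = 1)
    (hUm : ∀ n : List 𝒩, n ≠ [] → Kminus (Um n))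
    (hUp : ∀ n : List 𝒩, Kplus (Up n))
    (hEq : mmul Um T = Up)
    (hUm0' : Um' [] = 1) (hUp0' : Up' [] = 1)
    (hUm' : ∀ n : List 𝒩, n ≠ [] → Kminus (Um' n))
    (hUp' : ∀ n : List 𝒩, Kplus (Up' n))
    (hEq' : mmul Um' T = Up') :
    Um = Um' ∧ Up = Up' := by
  have hT0 : T [] = 1 := hT.1
  have key : ∀ N : ℕ, ∀ n : List 𝒩, n.length = N → Um n = Um' n := by
    intro N
    induction N using Nat.strong_induction_on with
    | _ N ih =>
      intro n hn
      rcases eq_or_ne n [] with rfl | hne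
      · rw [hUm0, hUm0']
      · have h1 := congrFun hEq n
        have h2 := congrFun hEq' n
        simp only [mmul] at h1 h2
        rw [Finset.sum_range_succ] at h1 h2
        have hsum : ∑ i ∈ Finset.range n.length, Um (n.take i) * T (n.drop i)
            = ∑ i ∈ Finset.range n.length, Um' (n.take i) * T (n.drop i) := by
          apply Finset.sum_congr rfl
          intro i hi
          rw [Finset.mem_range] at hi
          rw [ih i (hn ▸ hi) (n.take i)
            (by simp [List.length_take, Nat.min_eq_left hi.le])]
        rw [List.take_length, List.drop_length, hT0, mul_one] at h1 h2
        have hdiff : Um n - Um' n = Up n - Up' n := by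
          rw [← h1, ← h2, hsum]; ring
        have hc : ∀ m : ℤ, (Um n - Um' n).coeff m = 0 := by
          intro m
          rcases le_or_gt 0 m with hm | hm
          · rw [HahnSeries.coeff_sub, hUm n hne m hm, hUm' n hne m hm, sub_zero]
          · rw [hdiff, HahnSeries.coeff_sub, hUp n m hm, hUp' n m hm, sub_zero]
        have h0 : Um n - Um' n = 0 :=
          HahnSeries.ext (funext fun m => by rw [hc m, HahnSeries.coeff_zero])
        exact sub_eq_zero.mp h0
  have hmm : Um = Um' := funext fun n => key n.length n rfl
  exact ⟨hmm, by rw [← hEq, ← hEq', hmm]⟩
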